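/- Let A be a commutative ring and S = A[t_1,...,t_d] graded with each t_i in degree 1. The graded dual D(M) of a graded S-module M, defined by D(M)_k = Hom_A(M_{-k}, A) with S-action (s·φ)(m) = φ(s·m), is a contravariant functor on graded S-modules, and there is a natural isomorphism of graded S-modules H^d_I(S) ≅ A ⊗_A D(S(-d)), i.e., the degree-k piece of H^d_I(S) is naturally isomorphic to Hom_A(S_{-k-d}, A). -/

import Mathlib

/-!
STATEMENT 2: Let `A` be a commutative ring and `S = A[t_1,…,t_d]` graded with each `t_i` in
degree 1.  The graded dual `D(M)` of a graded `S`-module `M`, defined by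
`D(M)_k = Hom_A(M_{-k}, A)` with `S`-action `(s·φ)(m) = φ(s·m)`, makes
`⊕_k Hom_A(S_{-k-d}, A) = D(S(-d))` a graded `S`-module, and there is a natural isomorphism of
graded `S`-modules `H^d_I(S) ≅ D(S(-d))`: the degree-`k` piece of `H^d_I(S)` is naturally
isomorphic to `Hom_A(S_{-k-d}, A)`.

Formalization: `H^d_I(S)` is computed from the top of the Čech complex on `t_1,…,t_d` as in
Statement 0.  The isomorphism is given degreewise by `A`-linear isomorphisms
`e k : H^d_I(S)_k ≅ Hom_A(S_{-k-d}, A)`; that it is an isomorphism of graded `S`-modules, where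
the `S`-action on the dual side is `(s·φ)(m) = φ(s·m)` (contravariantly, i.e. `D` is a
contravariant functor in its argument), is expressed by the compatibility with multiplication
by each generator `t_i`: `e (k+1) (t_i • x) (G) = e k (x) (t_i * G)`.
-/

open MvPolynomial

noncomputable section

variable (A : Type) [CommRing A] (d : ℕ)

/-- `t_1 ⋯ t_d`. -/
def prodAll : MvPolynomial (Fin d) A := ∏ i, X i

/-- `t_1 ⋯ t_{i-1} t_{i+1} ⋯ t_d`. -/
def prodHat (i : Fin d) : MvPolynomial (Fin d) A := ∏ j ∈ Finset.univ.erase i, X j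

/-- The top term `S[(t_1⋯t_d)^{-1}]` of the Čech complex. -/
abbrev LTop := Localization.Away (prodAll A d)

theorem prodHat_isUnit (i : Fin d) :
    IsUnit (algebraMap (MvPolynomial (Fin d) A) (LTop A d) (prodHat A d i)) := by
  have h : prodHat A d i * X i = prodAll A d := by
    rw [prodHat, prodAll, Finset.prod_erase_mul _ _ (Finset.mem_univ i)]
  have hu : IsUnit (algebraMap (MvPolynomial (Fin d) A) (LTop A d) (prodAll A d)) :=
    IsLocalization.Away.algebraMap_isUnit (prodAll A d)
  have hu2 : IsUnit (algebraMap (MvPolynomial (Fin d) A) (LTop A d) (prodHat A d i) *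
      algebraMap (MvPolynomial (Fin d) A) (LTop A d) (X i)) := by
    rw [← map_mul, h]; exact hu
  exact isUnit_of_mul_isUnit_left hu2

/-- The `i`-th component of the last Čech differential. -/
def cechTopMap (i : Fin d) : Localization.Away (prodHat A d i) →+* LTop A d :=
  Localization.awayLift (algebraMap _ _) (prodHat A d i) (prodHat_isUnit A d i)

/-- The image of the last Čech differential. -/
def cechImage : Submodule (MvPolynomial (Fin d) A) (LTop A d) :=
  Submodule.span _ (⋃ i : Fin d, Set.range (cechTopMap A d i))

/-- `H^d_I(S)`, the cokernel. -/
abbrev TopLocalCohomology := LTop A d ⧸ cechImage A d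

/-- The element `F/(t_1⋯t_d)^m`. -/
def frac (F : MvPolynomial (Fin d) A) (m : ℕ) : LTop A d :=
  Localization.mk F ⟨prodAll A d ^ m, Submonoid.pow_mem _ (Submonoid.mem_powers _) m⟩

/-- The degree-`k` graded piece of `S[(t_1⋯t_d)^{-1}]`. -/
def LTopDeg (k : ℤ) : Submodule A (LTop A d) :=
  Submodule.span A
    {x | ∃ (m e : ℕ) (F : MvPolynomial (Fin d) A), (e : ℤ) = k + d * m ∧
      F ∈ homogeneousSubmodule (Fin d) A e ∧ x = frac A d F m}

/-- The degree-`k` graded piece `H^d_I(S)_k`. -/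
def HTopDeg (k : ℤ) : Submodule A (TopLocalCohomology A d) :=
  (LTopDeg A d k).map ((cechImage A d).mkQ.restrictScalars A)

/-- The degree-`j` graded piece `S_j` of `S`, for `j : ℤ`. -/
def SDeg (j : ℤ) : Submodule A (MvPolynomial (Fin d) A) :=
  if h : 0 ≤ j then homogeneousSubmodule (Fin d) A j.toNat else ⊥

/-!
The residue `F / (t_1 ⋯ t_d) ^ m ↦ coefficient of (t_1 ⋯ t_d)⁻¹` gives an `A`-bilinear pairing
`⟨x, G⟩ = res (G x)` between `S[(t_1 ⋯ t_d)⁻¹]` and `S`. It is `S`-balanced and kills the image of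
the last Čech differential, whose elements are sums of Laurent monomials with some nonnegative
exponent, so it descends to `H^d_I(S)`. In degree `k` it is perfect against `S_{-k-d}`: a fraction
`F / (t_1 ⋯ t_d) ^ m` orthogonal to `S_{-k-d}` only has monomials `t^b` with some `b_i ≥ m`, and
these lie in the Čech image; and a functional `λ` on `S_e` is the pairing against
`(∑_g λ(t^g) t^(e·1 - g)) / (t_1 ⋯ t_d) ^ (e + 1)`.
-/

lemma degree_eq_of_mem_support {σ R : Type*} [CommSemiring R] {e : ℕ} {F : MvPolynomial σ R}
    (hF : F.IsHomogeneous e) {b : σ →₀ ℕ} (hb : b ∈ F.support) : b.degree = e := by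
  by_contra h
  exact mem_support_iff.mp hb (hF.coeff_eq_zero h)

def allOnes : Fin d →₀ ℕ := ∑ i, Finsupp.single i 1

@[simp]
lemma allOnes_apply (j : Fin d) : allOnes d j = 1 := by
  simp [allOnes, Finset.sum_apply', Finsupp.single_apply]

lemma degree_allOnes : (allOnes d).degree = d := by
  simp [allOnes, Finsupp.degree_single]

lemma mem_finsuppAntidiag_univ {e : ℕ} {g : Fin d →₀ ℕ} :
    g ∈ Finset.finsuppAntidiag Finset.univ e ↔ g.degree = e := by
  simp [Finsupp.degree_eq_sum]

lemma le_nsmul_allOnes {e : ℕ} {g : Fin d →₀ ℕ} (hg : g.degree = e) : g ≤ e • allOnes d :=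
  fun j => by simpa [← hg] using Finsupp.le_degree j g

lemma prodAll_eq_monomial : prodAll A d = monomial (allOnes d) 1 := by
  simp only [prodAll, allOnes, monomial_sum_one, X]

lemma prodAll_pow_eq_monomial (m : ℕ) : prodAll A d ^ m = monomial (m • allOnes d) 1 := by
  rw [prodAll_eq_monomial, monomial_pow, one_pow]

lemma isHomogeneous_prodAll_pow (n : ℕ) : (prodAll A d ^ n).IsHomogeneous (d * n) := by
  rw [prodAll_pow_eq_monomial]
  exact isHomogeneous_monomial _ (by rw [map_nsmul, degree_allOnes, smul_eq_mul, mul_comm])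

lemma prodHat_mul_X (i : Fin d) : prodHat A d i * X i = prodAll A d :=
  Finset.prod_erase_mul _ _ (Finset.mem_univ i)

lemma coeff_prodAll_pow_mul (n : ℕ) (b : Fin d →₀ ℕ) (F : MvPolynomial (Fin d) A) :
    coeff (n • allOnes d + b) (prodAll A d ^ n * F) = coeff b F := by
  rw [prodAll_pow_eq_monomial, coeff_monomial_mul, one_mul]

lemma SDeg_natCast (e : ℕ) : SDeg A d e = homogeneousSubmodule (Fin d) A e := by
  simp [SDeg]

lemma SDeg_eq_bot {j : ℤ} (h : j < 0 ∨ (d = 0 ∧ j ≠ 0)) : SDeg A d j = ⊥ := by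
  rcases lt_or_ge j 0 with hneg | hnonneg
  · simp [SDeg, not_le.mpr hneg]
  obtain ⟨rfl, hj⟩ := h.resolve_left hnonneg.not_gt
  lift j to ℕ using hnonneg
  rw [SDeg_natCast, eq_bot_iff]
  intro F hF
  ext b
  rw [Subsingleton.elim b 0, coeff_zero]
  exact hF.coeff_eq_zero (by simpa using fun h => hj (congrArg Nat.cast h.symm))

lemma exists_linearMap_extension {j : ℤ} (hj : 0 ≤ j) (l : SDeg A d j →ₗ[A] A) :
    ∃ Λ : MvPolynomial (Fin d) A →ₗ[A] A, ∀ G (hG : G ∈ SDeg A d j), Λ G = l ⟨G, hG⟩ := by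
  lift j to ℕ using hj
  refine ⟨l ∘ₗ (homogeneousComponent j).codRestrict _ fun G => ?_, fun G hG => ?_⟩
  · rw [SDeg_natCast]
    exact homogeneousComponent_mem j G
  · rw [SDeg_natCast] at hG
    exact congrArg l (Subtype.ext (homogeneousComponent_eq_self hG))

lemma exists_frac_eq (x : LTop A d) : ∃ p : MvPolynomial (Fin d) A × ℕ, frac A d p.1 p.2 = x :=
  Localization.induction_on x fun ⟨F, ⟨_, m, hm⟩⟩ => ⟨(F, m), by subst hm; rfl⟩

lemma frac_add_frac (F F' : MvPolynomial (Fin d) A) (m m' : ℕ) :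
    frac A d F m + frac A d F' m' =
      frac A d (prodAll A d ^ m' * F + prodAll A d ^ m * F') (m + m') := by
  rw [frac, frac, Localization.add_mk, add_comm, frac]
  congr 1
  exact Subtype.ext (pow_add _ _ _).symm

lemma smul_frac {R : Type*} [SMul R (MvPolynomial (Fin d) A)]
    [IsScalarTower R (MvPolynomial (Fin d) A) (MvPolynomial (Fin d) A)]
    (a : R) (F : MvPolynomial (Fin d) A) (m : ℕ) :
    a • frac A d F m = frac A d (a • F) m :=
  Localization.smul_mk _ _ _

lemma algebraMap_mul_frac (G F : MvPolynomial (Fin d) A) (m : ℕ) :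
    algebraMap _ (LTop A d) G * frac A d F m = frac A d (G * F) m := by
  rw [← Algebra.smul_def, smul_frac, smul_eq_mul]

lemma frac_prodAll_pow_mul_self (F : MvPolynomial (Fin d) A) (m : ℕ) :
    frac A d (prodAll A d ^ m * F) m = algebraMap _ (LTop A d) F := by
  rw [frac, Localization.mk_eq_mk_iff.mpr, Localization.mk_one_eq_algebraMap]
  exact Localization.r_iff_exists.mpr ⟨1, by simp [mul_comm]⟩

lemma frac_prodAll_pow_mul_add (F : MvPolynomial (Fin d) A) (m n : ℕ) :
    frac A d (prodAll A d ^ n * F) (m + n) = frac A d F m := by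
  rw [frac, frac, Localization.mk_eq_mk_iff]
  exact Localization.r_iff_exists.mpr ⟨1, by simp only [pow_add]; ring⟩

/-- The coefficient of `(t_1 ⋯ t_d)⁻¹` in `F / (t_1 ⋯ t_d) ^ m`, read off after multiplying by
`t_1 ⋯ t_d` so that no exponent is negative. -/
def residueFrac (m : ℕ) (F : MvPolynomial (Fin d) A) : A :=
  coeff (m • allOnes d) (prodAll A d * F)

lemma residueFrac_congr {F F' : MvPolynomial (Fin d) A} {m m' : ℕ}
    (h : frac A d F m = frac A d F' m') : residueFrac A d m F = residueFrac A d m' F' := by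
  obtain ⟨⟨_, p, rfl⟩, hp⟩ := Localization.r_iff_exists.mp (Localization.mk_eq_mk_iff.mp h)
  have key : prodAll A d ^ (p + m') * (prodAll A d * F) =
      prodAll A d ^ (p + m) * (prodAll A d * F') := by
    simp only [pow_add] at hp ⊢
    linear_combination prodAll A d * hp
  rw [residueFrac, residueFrac, ← coeff_prodAll_pow_mul A d (p + m'), key,
    show (p + m') • allOnes d + m • allOnes d = (p + m) • allOnes d + m' • allOnes d by
      simp only [add_nsmul]; abel,
    coeff_prodAll_pow_mul]

lemma residueFrac_add (m : ℕ) (F F' : MvPolynomial (Fin d) A) :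
    residueFrac A d m (F + F') = residueFrac A d m F + residueFrac A d m F' := by
  simp only [residueFrac, mul_add, coeff_add]

lemma residueFrac_smul (m : ℕ) (a : A) (F : MvPolynomial (Fin d) A) :
    residueFrac A d m (a • F) = a * residueFrac A d m F := by
  simp only [residueFrac, mul_smul_comm, coeff_smul, smul_eq_mul]

lemma residueFrac_succ (m : ℕ) (F : MvPolynomial (Fin d) A) :
    residueFrac A d (m + 1) F = coeff (m • allOnes d) F := by
  rw [residueFrac, succ_nsmul', prodAll_eq_monomial, coeff_monomial_mul, one_mul]

lemma residueFrac_monomial_mul {m : ℕ} {g b : Fin d →₀ ℕ} (h : allOnes d + g + b = m • allOnes d)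
    (F : MvPolynomial (Fin d) A) : residueFrac A d m (monomial g 1 * F) = coeff b F := by
  rw [residueFrac, prodAll_eq_monomial, ← mul_assoc, monomial_mul, one_mul, ← h,
    coeff_monomial_mul, one_mul]

lemma residueFrac_X_pow_mul (i : Fin d) (n : ℕ) (H : MvPolynomial (Fin d) A) :
    residueFrac A d n (X i ^ n * H) = 0 := by
  have h : prodAll A d * (X i ^ n * H) = X i ^ (n + 1) * (prodHat A d i * H) := by
    rw [← prodHat_mul_X A d i]; ring
  rw [residueFrac, h, X_pow_eq_monomial, coeff_monomial_mul', if_neg]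
  intro h
  simpa using h i

lemma exists_residueFrac_eq (e : ℕ) (Λ : MvPolynomial (Fin d) A →ₗ[A] A) :
    ∃ F ∈ homogeneousSubmodule (Fin d) A (e * d - e),
      ∀ G ∈ homogeneousSubmodule (Fin d) A e, residueFrac A d (e + 1) (G * F) = Λ G := by
  set T := Finset.finsuppAntidiag (Finset.univ : Finset (Fin d)) e
  have hT : ∀ g ∈ T, g ≤ e • allOnes d ∧ g.degree = e := fun g hg =>
    have hg := (mem_finsuppAntidiag_univ d).mp hg
    ⟨le_nsmul_allOnes d hg, hg⟩
  refine ⟨∑ g ∈ T, monomial (e • allOnes d - g) (Λ (monomial g 1)),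
    Submodule.sum_mem _ fun g hg => isHomogeneous_monomial _ ?_, fun G hG => ?_⟩
  · have h := congrArg Finsupp.degree (tsub_add_cancel_of_le (hT g hg).1)
    simp only [map_add, map_nsmul, degree_allOnes, smul_eq_mul, (hT g hg).2] at h
    omega
  have hG_sum : G = ∑ g ∈ T, monomial g (coeff g G) := by
    conv_lhs => rw [G.as_sum]
    refine Finset.sum_subset (fun g hg => ?_) fun g _ hg => ?_
    · exact (mem_finsuppAntidiag_univ d).mpr (degree_eq_of_mem_support hG hg)
    · rw [notMem_support_iff.mp hg, map_zero]
  conv_rhs => rw [hG_sum, map_sum]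
  rw [residueFrac_succ, Finset.mul_sum, coeff_sum]
  refine Finset.sum_congr rfl fun g hg => ?_
  rw [coeff_mul_monomial', if_pos tsub_le_self, tsub_tsub_cancel_of_le (hT g hg).1,
    ← smul_eq_mul, ← map_smul, smul_monomial, smul_eq_mul, mul_one]

def residueFun (x : LTop A d) : A :=
  residueFrac A d (exists_frac_eq A d x).choose.2 (exists_frac_eq A d x).choose.1

lemma residueFun_frac (F : MvPolynomial (Fin d) A) (m : ℕ) :
    residueFun A d (frac A d F m) = residueFrac A d m F :=
  residueFrac_congr A d (exists_frac_eq A d _).choose_spec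

def residue : LTop A d →ₗ[A] A where
  toFun := residueFun A d
  map_add' x y := by
    obtain ⟨⟨F, m⟩, rfl⟩ := exists_frac_eq A d x
    obtain ⟨⟨F', m'⟩, rfl⟩ := exists_frac_eq A d y
    dsimp only
    rw [frac_add_frac, residueFun_frac, residueFun_frac, residueFun_frac, residueFrac_add,
      residueFrac_congr A d (frac_prodAll_pow_mul_add A d F m m'), add_comm m m',
      residueFrac_congr A d (frac_prodAll_pow_mul_add A d F' m' m)]
  map_smul' a x := by
    obtain ⟨⟨F, m⟩, rfl⟩ := exists_frac_eq A d x
    rw [smul_frac, residueFun_frac, residueFun_frac, residueFrac_smul]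
    rfl

lemma residue_frac (F : MvPolynomial (Fin d) A) (m : ℕ) :
    residue A d (frac A d F m) = residueFrac A d m F :=
  residueFun_frac A d F m

def pairing : LTop A d →ₗ[A] MvPolynomial (Fin d) A →ₗ[A] A :=
  ((LinearMap.mul A (LTop A d)).compr₂ (residue A d)).flip.compl₂
    ((Algebra.linearMap (MvPolynomial (Fin d) A) (LTop A d)).restrictScalars A)

lemma pairing_apply (x : LTop A d) (G : MvPolynomial (Fin d) A) :
    pairing A d x G = residue A d (algebraMap _ _ G * x) := rfl

lemma pairing_frac (F G : MvPolynomial (Fin d) A) (m : ℕ) :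
    pairing A d (frac A d F m) G = residueFrac A d m (G * F) := by
  rw [pairing_apply, algebraMap_mul_frac, residue_frac]

lemma pairing_smul (s G : MvPolynomial (Fin d) A) (x : LTop A d) :
    pairing A d (s • x) G = pairing A d x (s * G) := by
  rw [pairing_apply, pairing_apply, Algebra.smul_def, RingHom.map_mul, mul_assoc, mul_left_comm]

lemma cechTopMap_mk (i : Fin d) (H : MvPolynomial (Fin d) A) (n : ℕ) :
    cechTopMap A d i
        (Localization.mk H ⟨prodHat A d i ^ n, Submonoid.pow_mem _ (Submonoid.mem_powers _) n⟩) =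
      frac A d (X i ^ n * H) n := by
  rw [cechTopMap, Localization.awayLift, IsLocalization.Away.lift, Localization.mk_eq_mk',
    IsLocalization.lift_mk'_spec, algebraMap_mul_frac, ← mul_assoc, ← mul_pow, prodHat_mul_X,
    frac_prodAll_pow_mul_self]

lemma pairing_eq_zero_of_mem_cechImage {x : LTop A d} (hx : x ∈ cechImage A d) :
    pairing A d x = 0 := by
  induction hx using Submodule.span_induction with
  | mem y hy =>
    obtain ⟨i, w, rfl⟩ := Set.mem_iUnion.mp hy
    induction w using Localization.induction_on with | H p =>
    obtain ⟨H, _, n, rfl⟩ := p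
    refine LinearMap.ext fun G => ?_
    rw [cechTopMap_mk, pairing_frac, mul_left_comm, residueFrac_X_pow_mul, LinearMap.zero_apply]
  | zero => exact map_zero _
  | add x y _ _ hx hy => rw [map_add, hx, hy, add_zero]
  | smul s x _ hx => refine LinearMap.ext fun G => ?_; rw [pairing_smul, hx]; rfl

lemma frac_monomial_mem_cechImage {b : Fin d →₀ ℕ} {m : ℕ} {i : Fin d} (hm : m ≤ b i) (a : A) :
    frac A d (monomial b a) m ∈ cechImage A d := by
  have hb : monomial b a = X i ^ m * monomial (b - Finsupp.single i m) a := by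
    rw [X_pow_eq_monomial, monomial_mul, one_mul,
      add_tsub_cancel_of_le (Finsupp.single_le_iff.mpr hm)]
  rw [hb, ← cechTopMap_mk]
  exact Submodule.subset_span (Set.mem_iUnion.mpr ⟨i, Set.mem_range_self _⟩)

def cohomologyPairing : TopLocalCohomology A d →ₗ[A] MvPolynomial (Fin d) A →ₗ[A] A :=
  ((cechImage A d).restrictScalars A).liftQ (pairing A d)
      (fun _ hx => pairing_eq_zero_of_mem_cechImage A d hx) ∘ₗ
    (Submodule.Quotient.restrictScalarsEquiv A (cechImage A d)).symm.toLinearMap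

lemma cohomologyPairing_smul (s G : MvPolynomial (Fin d) A) (x : TopLocalCohomology A d) :
    cohomologyPairing A d (s • x) G = cohomologyPairing A d x (s * G) := by
  obtain ⟨x, rfl⟩ := Submodule.Quotient.mk_surjective _ x
  exact pairing_smul A d s G x

lemma exists_frac_of_mem_LTopDeg {k : ℤ} {y : LTop A d} (hy : y ∈ LTopDeg A d k) :
    y = 0 ∨ ∃ (m e : ℕ) (F : MvPolynomial (Fin d) A), (e : ℤ) = k + d * m ∧
      F ∈ homogeneousSubmodule (Fin d) A e ∧ y = frac A d F m := by
  induction hy using Submodule.span_induction with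
  | mem x hx => exact Or.inr hx
  | zero => exact Or.inl rfl
  | add x y _ _ hx hy =>
    rcases hx with rfl | ⟨m, e, F, he, hF, rfl⟩
    · rwa [zero_add]
    rcases hy with rfl | ⟨m', e', F', he', hF', rfl⟩
    · rw [add_zero]; exact Or.inr ⟨m, e, F, he, hF, rfl⟩
    have hdeg : d * m + e' = d * m' + e := by zify; linear_combination he' - he
    refine Or.inr ⟨m + m', d * m' + e, _, ?_, Submodule.add_mem _
      ((isHomogeneous_prodAll_pow A d m').mul hF)
      (hdeg ▸ (isHomogeneous_prodAll_pow A d m).mul hF'), frac_add_frac A d F F' m m'⟩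
    push_cast
    linear_combination he
  | smul a x _ hx =>
    rcases hx with rfl | ⟨m, e, F, he, hF, rfl⟩
    · exact Or.inl (smul_zero a)
    · exact Or.inr ⟨m, e, a • F, he, Submodule.smul_mem _ a hF, smul_frac A d a F m⟩

lemma exists_le_apply_of_mem_support {k : ℤ} {m e : ℕ} {F : MvPolynomial (Fin d) A}
    (he : (e : ℤ) = k + d * m) (hF : F ∈ homogeneousSubmodule (Fin d) A e)
    (hF0 : ∀ G ∈ SDeg A d (-k - d), pairing A d (frac A d F m) G = 0)
    {b : Fin d →₀ ℕ} (hb : b ∈ F.support) : ∃ i, m ≤ b i := by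
  by_contra! hlt
  have hle : allOnes d + b ≤ m • allOnes d := fun j => by simpa [add_comm 1] using hlt j
  set g := m • allOnes d - (allOnes d + b)
  have hg : allOnes d + g + b = m • allOnes d := by
    rw [add_comm (allOnes d) g, add_assoc, tsub_add_cancel_of_le hle]
  have hdeg : (g.degree : ℤ) = -k - d := by
    have h := congrArg Finsupp.degree hg
    simp only [map_add, map_nsmul, degree_allOnes, smul_eq_mul] at h
    rw [degree_eq_of_mem_support hF hb] at h
    zify at h
    linear_combination h - he
  have hG : monomial g (1 : A) ∈ SDeg A d (-k - d) := by
    rw [← hdeg, SDeg_natCast]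
    exact isHomogeneous_monomial _ rfl
  apply mem_support_iff.mp hb
  rw [← residueFrac_monomial_mul A d hg, ← pairing_frac]
  exact hF0 _ hG

lemma frac_mem_cechImage_of_pairing_eq_zero {k : ℤ} {m e : ℕ} {F : MvPolynomial (Fin d) A}
    (he : (e : ℤ) = k + d * m) (hF : F ∈ homogeneousSubmodule (Fin d) A e)
    (hF0 : ∀ G ∈ SDeg A d (-k - d), pairing A d (frac A d F m) G = 0) :
    frac A d F m ∈ cechImage A d := by
  rw [F.as_sum, frac, Localization.mk_sum]
  refine Submodule.sum_mem _ fun b hb => ?_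
  obtain ⟨i, hi⟩ := exists_le_apply_of_mem_support A d he hF hF0 hb
  exact frac_monomial_mem_cechImage A d hi _

def gradedPairing (k : ℤ) : HTopDeg A d k →ₗ[A] SDeg A d (-k - d) →ₗ[A] A :=
  LinearMap.lcomp A A (SDeg A d (-k - d)).subtype ∘ₗ cohomologyPairing A d ∘ₗ
    (HTopDeg A d k).subtype

lemma gradedPairing_apply (k : ℤ) (x : HTopDeg A d k) (G : SDeg A d (-k - d)) :
    gradedPairing A d k x G = cohomologyPairing A d x G := rfl

lemma gradedPairing_injective (k : ℤ) : Function.Injective (gradedPairing A d k) := by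
  refine (injective_iff_map_eq_zero _).mpr ?_
  rintro ⟨_, y, hy, rfl⟩ h0
  rcases exists_frac_of_mem_LTopDeg A d hy with rfl | ⟨m, e, F, he, hF, rfl⟩
  · exact Subtype.ext (map_zero _)
  refine Subtype.ext ((Submodule.Quotient.mk_eq_zero _).mpr
    (frac_mem_cechImage_of_pairing_eq_zero A d he hF fun G hG => ?_))
  exact LinearMap.congr_fun h0 ⟨G, hG⟩

lemma gradedPairing_surjective (k : ℤ) : Function.Surjective (gradedPairing A d k) := by
  intro l
  by_cases hbot : SDeg A d (-k - d) = ⊥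
  · have : Subsingleton (SDeg A d (-k - d)) := by
      rw [hbot]; infer_instance
    exact ⟨0, Subsingleton.elim _ _⟩
  have hj : 0 ≤ -k - d := not_lt.mp fun h => hbot (SDeg_eq_bot A d (Or.inl h))
  obtain ⟨e, he⟩ := Int.eq_ofNat_of_zero_le hj
  have hd : d = 0 → e = 0 := fun hd => by
    by_contra he0
    exact hbot (SDeg_eq_bot A d (Or.inr ⟨hd, by omega⟩))
  obtain ⟨Λ, hΛ⟩ := exists_linearMap_extension A d hj l
  obtain ⟨F, hF, hFΛ⟩ := exists_residueFrac_eq A d e Λ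
  have hdeg : ((e * d - e : ℕ) : ℤ) = k + d * (e + 1) := by
    rcases Nat.eq_zero_or_pos d with rfl | hd_pos
    · simp [hd rfl] at he ⊢; omega
    push_cast [Nat.cast_sub (Nat.le_mul_of_pos_right e hd_pos)]
    linear_combination he
  have hx : frac A d F (e + 1) ∈ LTopDeg A d k :=
    Submodule.subset_span ⟨e + 1, e * d - e, F, by exact_mod_cast hdeg, hF, rfl⟩
  refine ⟨⟨_, Submodule.mem_map_of_mem hx⟩, LinearMap.ext fun ⟨G, hG⟩ => ?_⟩
  have hG' : G ∈ homogeneousSubmodule (Fin d) A e := by rwa [he, SDeg_natCast] at hG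
  rw [gradedPairing_apply]
  exact (pairing_frac A d F G (e + 1)).trans ((hFΛ G hG').trans (hΛ G hG))

theorem top_local_cohomology_iso_graded_dual :
    ∃ e : ∀ k : ℤ, HTopDeg A d k ≃ₗ[A] (SDeg A d (-k - d) →ₗ[A] A),
      -- the degreewise isomorphisms assemble to an isomorphism of graded `S`-modules
      -- `H^d_I(S) ≅ D(S(-d))`, where the (contravariant) `S`-module structure of the graded
      -- dual `D` is `(s·φ)(m) = φ(s·m)`:
      ∀ (i : Fin d) (k : ℤ) (x : TopLocalCohomology A d)
        (hx : x ∈ HTopDeg A d k) (hx' : (X i : MvPolynomial (Fin d) A) • x ∈ HTopDeg A d (k + 1))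
        (G : MvPolynomial (Fin d) A) (hG : G ∈ SDeg A d (-(k + 1) - d))
        (hG' : (X i : MvPolynomial (Fin d) A) * G ∈ SDeg A d (-k - d)),
        e (k + 1) ⟨(X i : MvPolynomial (Fin d) A) • x, hx'⟩ ⟨G, hG⟩ =
          e k ⟨x, hx⟩ ⟨(X i : MvPolynomial (Fin d) A) * G, hG'⟩ :=
  ⟨fun k => LinearEquiv.ofBijective (gradedPairing A d k)
      ⟨gradedPairing_injective A d k, gradedPairing_surjective A d k⟩,
    fun i _ x _ _ G _ _ => cohomologyPairing_smul A d (X i) G x⟩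

end
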